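/- Let C be a cycle of length at most 11 in a plane graph containing no cycles of length 4 or 6. If C has a bad partition (i.e., C has a claw, edge-claw, path-claw, or pentagon-claw), then the length of C is 9, 10, or 11. Moreover: if |C| = 9 then C has a claw whose three cells are 5-cycles; if |C| = 10 then C has an edge-claw with cells of lengths (3,7,3,7) or (5,5,5,5), or a pentagon-claw with five 5-cells; if |C| = 11 then C has a claw with cells of lengths (3,7,7) or (5,5,7), an edge-claw with cells (3,7,3,8), or a path-claw with five 5-cells. -/

import Mathlib

/-!
A path of `ℓ` vertices off the cycle `C` that joins a neighbour of `C i` to a neighbour of `C j`,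
closed up by either arc of `C` between `C i` and `C j`, is a cycle of length
`ℓ + 1 + (arc length)`, which therefore is neither 4 nor 6.  In a claw, edge-claw, path-claw or
pentagon-claw such paths join every two attachment positions, and for `|C| ≤ 11` a finite search
over the positions, with one of them normalised to `0`, shows that only the listed configurations
satisfy all these constraints.
-/

open SimpleGraph Finset

/-- A cycle of length `n` in the graph `G`, given as an injective cyclic
sequence of `n` vertices with consecutive vertices adjacent. -/
structure GCycle {V : Type} (G : SimpleGraph V) (n : ℕ) where
  toFun : ZMod n → V
  inj : Function.Injective toFun
  adj : ∀ i, G.Adj (toFun i) (toFun (i + 1))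
  three_le : 3 ≤ n

/-- A `(1,0,0)`-coloring of the subgraph of `G` induced on `S`: the color
class of `0` induces a graph of maximum degree at most `1`, while the color
classes of `1` and `2` are independent sets. -/
def Is100Coloring {V : Type} (G : SimpleGraph V) (S : Set V) (c : V → Fin 3) : Prop :=
  (∀ v ∈ S, ∀ w ∈ S, G.Adj v w → c v = c w → c v = 0) ∧
    ∀ v ∈ S, c v = 0 → {w ∈ S | G.Adj v w ∧ c w = 0}.Subsingleton

/-- A (finite, simple, connected-or-not) plane graph: a graph together with an
abstract set of faces (with their sizes), a distinguished outer face, regions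
strictly inside/outside each cycle (given by its vertex set), and a clockwise
orientation predicate on vertex triples.  Euler's formula and the face
handshake identity are part of the data. -/
structure PlaneGraph where
  V : Type
  [fintypeV : Fintype V]
  [decEqV : DecidableEq V]
  G : SimpleGraph V
  [decAdj : DecidableRel G.Adj]
  Face : Type
  [fintypeF : Fintype Face]
  [decEqF : DecidableEq Face]
  /-- the vertices on the boundary of a face -/
  fverts : Face → Finset V
  /-- the size (boundary length) of a face -/
  fsize : Face → ℕ
  /-- the outer (unbounded) face -/
  outer : Face
  /-- the set of vertices strictly inside a cycle with the given vertex set -/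
  inside : Set V → Set V
  /-- the set of vertices strictly outside a cycle with the given vertex set -/
  outside : Set V → Set V
  /-- `cw u v w`: the points `u`, `v`, `w` occur in clockwise order -/
  cw : V → V → V → Prop
  region_disj_inside : ∀ S : Set V, inside S ∩ S = ∅
  region_disj_outside : ∀ S : Set V, outside S ∩ S = ∅
  region_disj : ∀ S : Set V, inside S ∩ outside S = ∅
  region_cover : ∀ S : Set V, inside S ∪ outside S ∪ S = Set.univ
  euler : Fintype.card V + Fintype.card Face = G.edgeFinset.card + 2
  face_handshake : ∑ f : Face, fsize f = 2 * G.edgeFinset.card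

attribute [instance] PlaneGraph.fintypeV PlaneGraph.decEqV PlaneGraph.decAdj
  PlaneGraph.fintypeF PlaneGraph.decEqF

namespace PlaneGraph

variable (P : PlaneGraph)

/-- The vertex set of a cycle. -/
def cverts {n : ℕ} (c : GCycle P.G n) : Set P.V := Set.range c.toFun

/-- A vertex is internal if it does not lie on the outer face. -/
def Internal (v : P.V) : Prop := v ∉ P.fverts P.outer

/-- A light vertex: internal and of degree 3. -/
def Light (v : P.V) : Prop := P.Internal v ∧ P.G.degree v = 3

/-- `S` (the vertex set of a cycle) has a claw inside. -/
def HasClaw (S : Set P.V) : Prop :=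
  ∃ x ∈ P.inside S, 3 ≤ {y ∈ S | P.G.Adj x y}.ncard

/-- `S` has an edge-claw inside. -/
def HasEdgeClaw (S : Set P.V) : Prop :=
  ∃ x ∈ P.inside S, ∃ y ∈ P.inside S, P.G.Adj x y ∧
    2 ≤ {z ∈ S | P.G.Adj x z}.ncard ∧ 2 ≤ {z ∈ S | P.G.Adj y z}.ncard

/-- `S` has a path-claw inside. -/
def HasPathClaw (S : Set P.V) : Prop :=
  ∃ x ∈ P.inside S, ∃ y ∈ P.inside S, ∃ z ∈ P.inside S,
    x ≠ z ∧ P.G.Adj x y ∧ P.G.Adj y z ∧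
      2 ≤ {w ∈ S | P.G.Adj x w}.ncard ∧ 1 ≤ {w ∈ S | P.G.Adj y w}.ncard ∧
        2 ≤ {w ∈ S | P.G.Adj z w}.ncard

/-- `S` has a pentagon-claw inside. -/
def HasPentagonClaw (S : Set P.V) : Prop :=
  ∃ x : ZMod 5 → P.V, Function.Injective x ∧ (∀ i, x i ∈ P.inside S) ∧
    (∀ i, P.G.Adj (x i) (x (i + 1))) ∧ ∀ i, ∃ w ∈ S, P.G.Adj (x i) w

/-- `S` is bad: it has a claw, edge-claw, path-claw or pentagon-claw inside. -/
def Bad (S : Set P.V) : Prop :=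
  P.HasClaw S ∨ P.HasEdgeClaw S ∨ P.HasPathClaw S ∨ P.HasPentagonClaw S

/-- A good cycle: length at most 11 and no claw, edge-claw, path-claw or
pentagon-claw inside. -/
def GoodCycle {n : ℕ} (c : GCycle P.G n) : Prop :=
  n ≤ 11 ∧ ¬ P.Bad (P.cverts c)

/-- `c` is the boundary cycle of the outer face. -/
def IsOuterCycle {n : ℕ} (c : GCycle P.G n) : Prop :=
  P.cverts c = ↑(P.fverts P.outer)

/-- The coloring `φ` of (the graph induced on) `Dset` super-extends to `G`. -/
def SuperExtends (Dset : Set P.V) (φ : P.V → Fin 3) : Prop :=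
  ∃ c : P.V → Fin 3, Is100Coloring P.G Set.univ c ∧ (∀ v ∈ Dset, c v = φ v) ∧
    ∀ v ∈ Dset, ∀ w, w ∉ Dset → P.G.Adj v w → c v ≠ c w

/-- No cycles of length 4 and no cycles of length 6. -/
def NoC4C6 : Prop := IsEmpty (GCycle P.G 4) ∧ IsEmpty (GCycle P.G 6)

/-- A counterexample to the super-extension theorem: a connected plane graph
without 4- or 6-cycles whose outer boundary is a good cycle, admitting a
`(1,0,0)`-coloring of the induced graph on the outer boundary that does not
super-extend. -/
def Counterexample : Prop :=
  P.G.Connected ∧ P.NoC4C6 ∧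
    ∃ (n : ℕ) (D : GCycle P.G n), P.IsOuterCycle D ∧ P.GoodCycle D ∧
      ∃ φ : P.V → Fin 3, Is100Coloring P.G (P.cverts D) φ ∧
        ¬ P.SuperExtends (P.cverts D) φ

/-- The size `|V| + |E|` of a plane graph. -/
def size : ℕ := Fintype.card P.V + P.G.edgeFinset.card

/-- A minimal counterexample to the super-extension theorem. -/
def MinimalCex : Prop :=
  P.Counterexample ∧ ∀ Q : PlaneGraph, Q.Counterexample → P.size ≤ Q.size

/-- `s` is the vertex set of an inner face of size `k`. -/
def IsFaceSet (s : Finset P.V) (k : ℕ) : Prop :=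
  ∃ f : P.Face, f ≠ P.outer ∧ P.fverts f = s ∧ P.fsize f = k

/-- `[u,v,w]` is an (inner) 3-face. -/
def IsTri (u v w : P.V) : Prop :=
  P.G.Adj u v ∧ P.G.Adj v w ∧ P.G.Adj u w ∧ P.IsFaceSet {u, v, w} 3

/-- `[a,b,c,d,e]` is an (inner) 5-face, with boundary in this cyclic order. -/
def IsPenta (a b c d e : P.V) : Prop :=
  P.G.Adj a b ∧ P.G.Adj b c ∧ P.G.Adj c d ∧ P.G.Adj d e ∧ P.G.Adj e a ∧
    ({a, b, c, d, e} : Finset P.V).card = 5 ∧ P.IsFaceSet {a, b, c, d, e} 5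

end PlaneGraph

namespace PlaneGraph

variable (P : PlaneGraph)

/-- A claw of the cycle `c` whose three cells have lengths
`g₁ + 2`, `g₂ + 2`, `g₃ + 2`, where `gᵢ` are the arc gaps between consecutive
attachment vertices of the claw center on `c`. -/
def HasClawCells {n : ℕ} (c : GCycle P.G n) (g₁ g₂ g₃ : ℕ) : Prop :=
  g₁ + g₂ + g₃ = n ∧
    ∃ x ∈ P.inside (P.cverts c), ∃ i : ZMod n,
      P.G.Adj x (c.toFun i) ∧ P.G.Adj x (c.toFun (i + (g₁ : ZMod n))) ∧
        P.G.Adj x (c.toFun (i + ((g₁ + g₂ : ℕ) : ZMod n)))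

/-- An edge-claw of `c` with arc gaps `a, b, d, e` between consecutive
attachment vertices; its four cells have lengths `a+2`, `b+3`, `d+2`, `e+3`
(the cells of lengths `b+3` and `e+3` contain the inner edge `xy`). -/
def HasEdgeClawCells {n : ℕ} (c : GCycle P.G n) (a b d e : ℕ) : Prop :=
  a + b + d + e = n ∧
    ∃ x ∈ P.inside (P.cverts c), ∃ y ∈ P.inside (P.cverts c), P.G.Adj x y ∧
      ∃ i : ZMod n, P.G.Adj x (c.toFun i) ∧ P.G.Adj x (c.toFun (i + (a : ZMod n))) ∧
        P.G.Adj y (c.toFun (i + ((a + b : ℕ) : ZMod n))) ∧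
          P.G.Adj y (c.toFun (i + ((a + b + d : ℕ) : ZMod n)))

/-- A pentagon-claw of `c` whose five attachment vertices are equally spaced
with arc gap `g`; each of its five cells has length `g + 3`. -/
def HasPentagonClawCells {n : ℕ} (c : GCycle P.G n) (g : ℕ) : Prop :=
  5 * g = n ∧
    ∃ x : ZMod 5 → P.V, Function.Injective x ∧
      (∀ j, x j ∈ P.inside (P.cverts c)) ∧
      (∀ j, P.G.Adj (x j) (x (j + 1))) ∧
      ∃ i : ZMod n, ∀ j : ZMod 5, P.G.Adj (x j) (c.toFun (i + ((g * j.val : ℕ) : ZMod n)))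

/-- A path-claw of `c` (inner path `x-y-z`) with arc gaps `g₁,…,g₅` between
consecutive attachment vertices; its five cells have lengths
`g₁+2`, `g₂+3`, `g₃+3`, `g₄+2`, `g₅+4`. -/
def HasPathClawCells {n : ℕ} (c : GCycle P.G n) (g₁ g₂ g₃ g₄ g₅ : ℕ) : Prop :=
  g₁ + g₂ + g₃ + g₄ + g₅ = n ∧
    ∃ x ∈ P.inside (P.cverts c), ∃ y ∈ P.inside (P.cverts c),
      ∃ z ∈ P.inside (P.cverts c), x ≠ z ∧ P.G.Adj x y ∧ P.G.Adj y z ∧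
        ∃ i : ZMod n, P.G.Adj x (c.toFun i) ∧
          P.G.Adj x (c.toFun (i + (g₁ : ZMod n))) ∧
          P.G.Adj y (c.toFun (i + ((g₁ + g₂ : ℕ) : ZMod n))) ∧
          P.G.Adj z (c.toFun (i + ((g₁ + g₂ + g₃ : ℕ) : ZMod n))) ∧
          P.G.Adj z (c.toFun (i + ((g₁ + g₂ + g₃ + g₄ : ℕ) : ZMod n)))

end PlaneGraph

/-- Joining positions `i`, `j` of an `n`-cycle by a path with `ℓ` inner vertices closes no
4- or 6-cycle with either arc between them. -/
def BridgeAdmissible {n : ℕ} (ℓ : ℕ) (i j : ZMod n) : Prop :=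
  ∀ d ∈ [i - j, j - i], ℓ + d.val + 1 ≠ 4 ∧ ℓ + d.val + 1 ≠ 6

instance {n ℓ : ℕ} (i j : ZMod n) : Decidable (BridgeAdmissible ℓ i j) :=
  inferInstanceAs (Decidable (∀ d ∈ [i - j, j - i], ℓ + d.val + 1 ≠ 4 ∧ ℓ + d.val + 1 ≠ 6))

theorem BridgeAdmissible.sub_right {n ℓ : ℕ} {i j : ZMod n} (h : BridgeAdmissible ℓ i j)
    (k : ZMod n) : BridgeAdmissible ℓ (i - k) (j - k) := by
  simpa [BridgeAdmissible] using h

theorem BridgeAdmissible.symm {n ℓ : ℕ} {i j : ZMod n} (h : BridgeAdmissible ℓ i j) :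
    BridgeAdmissible ℓ j i := by
  simpa [BridgeAdmissible, and_comm] using h

section Positions

variable {n : ℕ}

/- The arc-gap conditions of `PlaneGraph.HasClawCells` etc., with `X`, `Y`, `Z` standing for the
sets of positions on the cycle of the neighbours of the inner vertices. -/

def ClawPattern (X : Set (ZMod n)) (g₁ g₂ : ℕ) : Prop :=
  ∃ i ∈ X, i + (g₁ : ZMod n) ∈ X ∧ i + ((g₁ + g₂ : ℕ) : ZMod n) ∈ X

def EdgeClawPattern (X Y : Set (ZMod n)) (a b d : ℕ) : Prop :=
  ∃ i ∈ X, i + (a : ZMod n) ∈ X ∧ i + ((a + b : ℕ) : ZMod n) ∈ Y ∧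
    i + ((a + b + d : ℕ) : ZMod n) ∈ Y

def PathClawPattern (X Y Z : Set (ZMod n)) (g₁ g₂ g₃ g₄ : ℕ) : Prop :=
  ∃ i ∈ X, i + (g₁ : ZMod n) ∈ X ∧ i + ((g₁ + g₂ : ℕ) : ZMod n) ∈ Y ∧
    i + ((g₁ + g₂ + g₃ : ℕ) : ZMod n) ∈ Z ∧ i + ((g₁ + g₂ + g₃ + g₄ : ℕ) : ZMod n) ∈ Z

def PentagonClawPattern (X : ZMod 5 → Set (ZMod n)) (g : ℕ) : Prop :=
  ∃ i, ∀ j : ZMod 5, i + ((g * j.val : ℕ) : ZMod n) ∈ X j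

/-- Consecutive attachment positions of a pentagon-claw are joined through the pentagon by paths
with 2 and with 5 vertices. -/
def PentagonStep (i j : ZMod n) : Prop := BridgeAdmissible 2 i j ∧ BridgeAdmissible 5 i j

/-- Attachment positions two apart on a pentagon-claw are joined by paths with 3 and 4 vertices. -/
def PentagonSkip (i j : ZMod n) : Prop := BridgeAdmissible 3 i j ∧ BridgeAdmissible 4 i j

theorem PentagonStep.sub_right {i j : ZMod n} (h : PentagonStep i j) (k : ZMod n) :
    PentagonStep (i - k) (j - k) :=
  ⟨h.1.sub_right k, h.2.sub_right k⟩

theorem PentagonSkip.sub_right {i j : ZMod n} (h : PentagonSkip i j) (k : ZMod n) :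
    PentagonSkip (i - k) (j - k) :=
  ⟨h.1.sub_right k, h.2.sub_right k⟩

section Decidable

instance (i j : ZMod n) : Decidable (PentagonStep i j) := inferInstanceAs (Decidable (_ ∧ _))

instance (i j : ZMod n) : Decidable (PentagonSkip i j) := inferInstanceAs (Decidable (_ ∧ _))

variable [NeZero n]

instance (X : Set (ZMod n)) [DecidablePred (· ∈ X)] (g₁ g₂ : ℕ) :
    Decidable (ClawPattern X g₁ g₂) :=
  inferInstanceAs (Decidable (∃ i, i ∈ X ∧ _))

instance (X Y : Set (ZMod n)) [DecidablePred (· ∈ X)] [DecidablePred (· ∈ Y)] (a b d : ℕ) :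
    Decidable (EdgeClawPattern X Y a b d) :=
  inferInstanceAs (Decidable (∃ i, i ∈ X ∧ _))

instance (X Y Z : Set (ZMod n)) [DecidablePred (· ∈ X)] [DecidablePred (· ∈ Y)]
    [DecidablePred (· ∈ Z)] (g₁ g₂ g₃ g₄ : ℕ) : Decidable (PathClawPattern X Y Z g₁ g₂ g₃ g₄) :=
  inferInstanceAs (Decidable (∃ i, i ∈ X ∧ _))

instance (X : ZMod 5 → Set (ZMod n)) [∀ j, DecidablePred (· ∈ X j)] (g : ℕ) :
    Decidable (PentagonClawPattern X g) :=
  inferInstanceAs (Decidable (∃ i, ∀ j : ZMod 5, i + ((g * j.val : ℕ) : ZMod n) ∈ X j))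

end Decidable

/- In the four lemmas below one attachment position is normalised to `0`, and the remaining
positions are quantified in an order that lets `decide` discard inadmissible ones early. -/

theorem clawPattern_of_bridgeAdmissible (hn3 : 3 ≤ n) (hn : n ≤ 11) {a : ZMod n} (ha : a ≠ 0)
    {b : ZMod n} (hb : b ≠ 0) (hab : a ≠ b)
    (hadm : ∀ i ∈ ({0, a, b} : Set (ZMod n)), ∀ j ∈ ({0, a, b} : Set (ZMod n)),
      BridgeAdmissible 1 i j) :
    (n = 9 ∧ ClawPattern {0, a, b} 3 3) ∨
      (n = 11 ∧ (ClawPattern {0, a, b} 1 5 ∨ ClawPattern {0, a, b} 3 3)) := by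
  interval_cases n <;> revert a b <;> decide

set_option synthInstance.maxSize 2000 in
theorem edgeClawPattern_of_bridgeAdmissible (hn3 : 3 ≤ n) (hn : n ≤ 11) {a : ZMod n} (ha : a ≠ 0)
    (hx : ∀ i ∈ ({0, a} : Set (ZMod n)), ∀ j ∈ ({0, a} : Set (ZMod n)), BridgeAdmissible 1 i j)
    {b b' : ZMod n} (hb : b ≠ b')
    (hy : ∀ i ∈ ({b, b'} : Set (ZMod n)), ∀ j ∈ ({b, b'} : Set (ZMod n)),
      BridgeAdmissible 1 i j)
    (hxy : ∀ i ∈ ({0, a} : Set (ZMod n)), ∀ j ∈ ({b, b'} : Set (ZMod n)),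
      BridgeAdmissible 2 i j)
    (hshare : ¬ (b ∈ ({0, a} : Set (ZMod n)) ∧ b' ∈ ({0, a} : Set (ZMod n)))) :
    (n = 10 ∧ (EdgeClawPattern {0, a} {b, b'} 1 4 1 ∨ EdgeClawPattern {b, b'} {0, a} 1 4 1 ∨
        EdgeClawPattern {0, a} {b, b'} 3 2 3 ∨ EdgeClawPattern {b, b'} {0, a} 3 2 3)) ∨
      (n = 11 ∧ (EdgeClawPattern {0, a} {b, b'} 1 4 1 ∨ EdgeClawPattern {b, b'} {0, a} 1 4 1 ∨
        EdgeClawPattern {0, a} {b, b'} 1 5 1 ∨ EdgeClawPattern {b, b'} {0, a} 1 5 1)) := by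
  interval_cases n <;> revert a b b' <;> decide

set_option synthInstance.maxSize 2000 in
theorem pathClawPattern_of_bridgeAdmissible (hn3 : 3 ≤ n) (hn : n ≤ 11) {a : ZMod n} (ha : a ≠ 0)
    (hx : ∀ i ∈ ({0, a} : Set (ZMod n)), ∀ j ∈ ({0, a} : Set (ZMod n)), BridgeAdmissible 1 i j)
    {r : ZMod n}
    (hxy : ∀ i ∈ ({0, a} : Set (ZMod n)), ∀ j ∈ ({r} : Set (ZMod n)), BridgeAdmissible 2 i j)
    {q q' : ZMod n} (hq : q ≠ q')
    (hz : ∀ i ∈ ({q, q'} : Set (ZMod n)), ∀ j ∈ ({q, q'} : Set (ZMod n)),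
      BridgeAdmissible 1 i j)
    (hzy : ∀ i ∈ ({q, q'} : Set (ZMod n)), ∀ j ∈ ({r} : Set (ZMod n)), BridgeAdmissible 2 i j)
    (hxz : ∀ i ∈ ({0, a} : Set (ZMod n)), ∀ j ∈ ({q, q'} : Set (ZMod n)),
      BridgeAdmissible 3 i j) :
    n = 11 ∧ (PathClawPattern {0, a} {r} {q, q'} 3 2 2 3 ∨
      PathClawPattern {q, q'} {r} {0, a} 3 2 2 3) := by
  interval_cases n <;> revert a r q q' <;> decide

set_option synthInstance.maxSize 8000 in
theorem pentagonClawPattern_of_step_skip (hn3 : 3 ≤ n) (hn : n ≤ 11) (d : ZMod 5 → ZMod n)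
    (h0 : d 0 = 0) (hstep : ∀ j, PentagonStep (d j) (d (j + 1)))
    (hskip : ∀ j, PentagonSkip (d j) (d (j + 2))) :
    n = 10 ∧
      (PentagonClawPattern (fun j => {d j}) 2 ∨ PentagonClawPattern (fun j => {d (-j)}) 2) := by
  have key : ∀ d₀ : ZMod n, d₀ = 0 →
      ∀ d₁ : ZMod n, PentagonStep d₀ d₁ →
      ∀ d₂ : ZMod n, PentagonStep d₁ d₂ → PentagonSkip d₀ d₂ →
      ∀ d₃ : ZMod n, PentagonStep d₂ d₃ → PentagonSkip d₁ d₃ →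
      ∀ d₄ : ZMod n, PentagonStep d₃ d₄ → PentagonSkip d₂ d₄ →
        PentagonStep d₄ d₀ → PentagonSkip d₃ d₀ → PentagonSkip d₄ d₁ →
        n = 10 ∧ (PentagonClawPattern (fun j => {![d₀, d₁, d₂, d₃, d₄] j}) 2 ∨
          PentagonClawPattern (fun j => {![d₀, d₁, d₂, d₃, d₄] (-j)}) 2) := by
    clear hstep hskip h0 d
    interval_cases n <;> decide
  have hd : d = ![d 0, d 1, d 2, d 3, d 4] := by
    funext j
    fin_cases j <;> rfl
  rw [hd]
  exact key _ h0 _ (hstep 0) _ (hstep 1) (hskip 0) _ (hstep 2) (hskip 1) _ (hstep 3) (hskip 2)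
    (hstep 4) (hskip 3) (hskip 4)

end Positions

section Translate

variable {n : ℕ} {X Y Z A B C : Set (ZMod n)} (p : ZMod n)

theorem forall_bridgeAdmissible_of_add {ℓ : ℕ} (hXA : ∀ d ∈ X, p + d ∈ A)
    (hYB : ∀ d ∈ Y, p + d ∈ B) (h : ∀ i ∈ A, ∀ j ∈ B, BridgeAdmissible ℓ i j) :
    ∀ i ∈ X, ∀ j ∈ Y, BridgeAdmissible ℓ i j := fun i hi j hj => by
  simpa using (h _ (hXA i hi) _ (hYB j hj)).sub_right p

variable {p}

theorem ClawPattern.of_add {g₁ g₂ : ℕ} (h : ClawPattern X g₁ g₂) (hXA : ∀ d ∈ X, p + d ∈ A) :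
    ClawPattern A g₁ g₂ := by
  obtain ⟨i, h₀, h₁, h₂⟩ := h
  exact ⟨p + i, hXA _ h₀, by simpa [add_assoc] using hXA _ h₁, by simpa [add_assoc] using hXA _ h₂⟩

theorem EdgeClawPattern.of_add {a b d : ℕ} (h : EdgeClawPattern X Y a b d)
    (hXA : ∀ d ∈ X, p + d ∈ A) (hYB : ∀ d ∈ Y, p + d ∈ B) : EdgeClawPattern A B a b d := by
  obtain ⟨i, h₀, h₁, h₂, h₃⟩ := h
  exact ⟨p + i, hXA _ h₀, by simpa [add_assoc] using hXA _ h₁,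
    by simpa [add_assoc] using hYB _ h₂, by simpa [add_assoc] using hYB _ h₃⟩

theorem PathClawPattern.of_add {g₁ g₂ g₃ g₄ : ℕ} (h : PathClawPattern X Y Z g₁ g₂ g₃ g₄)
    (hXA : ∀ d ∈ X, p + d ∈ A) (hYB : ∀ d ∈ Y, p + d ∈ B) (hZC : ∀ d ∈ Z, p + d ∈ C) :
    PathClawPattern A B C g₁ g₂ g₃ g₄ := by
  obtain ⟨i, h₀, h₁, h₂, h₃, h₄⟩ := h
  exact ⟨p + i, hXA _ h₀, by simpa [add_assoc] using hXA _ h₁,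
    by simpa [add_assoc] using hYB _ h₂, by simpa [add_assoc] using hZC _ h₃,
    by simpa [add_assoc] using hZC _ h₄⟩

theorem PentagonClawPattern.of_add {X A : ZMod 5 → Set (ZMod n)} {g : ℕ}
    (h : PentagonClawPattern X g) (hXA : ∀ j, ∀ d ∈ X j, p + d ∈ A j) :
    PentagonClawPattern A g := by
  obtain ⟨i, hi⟩ := h
  exact ⟨p + i, fun j => by simpa [add_assoc] using hXA j _ (hi j)⟩

end Translate

namespace GCycle

variable {V : Type} {G : SimpleGraph V}

theorem nonempty_of_list {L : List V} (h3 : 3 ≤ L.length) (hnd : L.Nodup)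
    (hch : (L ++ L.take 1).IsChain G.Adj) : Nonempty (GCycle G L.length) := by
  have : NeZero L.length := ⟨by omega⟩
  have hwrap : ∀ m (hm : m ≤ L.length),
      (L ++ L.take 1)[m]'(by simp; omega) = L[m % L.length]'(Nat.mod_lt _ (by omega)) := by
    intro m hm
    rcases hm.lt_or_eq with h | rfl
    · simp [List.getElem_append_left h, Nat.mod_eq_of_lt h]
    · simp [List.getElem_append_right]
  refine ⟨⟨fun k => L[k.val]'(ZMod.val_lt k), fun a b h => ?_, fun k => ?_, h3⟩⟩
  · exact ZMod.val_injective _ ((hnd.getElem_inj_iff).1 h)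
  · have hk := hch.getElem k.val (by simp; have := ZMod.val_lt k; omega)
    rw [hwrap _ (ZMod.val_lt k).le, hwrap _ (ZMod.val_lt k)] at hk
    simpa [Nat.mod_eq_of_lt (ZMod.val_lt k), ZMod.val_add, ZMod.val_one_eq_one_mod,
      Nat.mod_eq_of_lt (show 1 < L.length by omega)] using hk

variable {n : ℕ} (c : GCycle G n)

def arc (i : ZMod n) (k : ℕ) : List V :=
  (List.range (k + 1)).map fun m : ℕ => c.toFun (i + m)

@[simp] theorem length_arc (i : ZMod n) (k : ℕ) : (c.arc i k).length = k + 1 := by simp [arc]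

theorem mem_range_of_mem_arc {i : ZMod n} {k : ℕ} {v : V} (hv : v ∈ c.arc i k) :
    v ∈ Set.range c.toFun := by
  obtain ⟨m, -, rfl⟩ := List.mem_map.1 hv
  exact ⟨_, rfl⟩

theorem nodup_arc (i : ZMod n) {k : ℕ} (hk : k < n) : (c.arc i k).Nodup := by
  refine (List.nodup_range).map_on fun a ha b hb h => ?_
  simp only [List.mem_range] at ha hb
  have := congrArg ZMod.val (add_left_cancel (c.inj h))
  rwa [ZMod.val_cast_of_lt (by omega), ZMod.val_cast_of_lt (by omega)] at this

theorem isChain_arc (i : ZMod n) (k : ℕ) : (c.arc i k).IsChain G.Adj := by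
  refine List.isChain_map _ |>.2 <| (List.isChain_range_succ _ _).2 fun m _ => ?_
  simpa [add_assoc] using c.adj (i + m)

@[simp] theorem head?_arc (i : ZMod n) (k : ℕ) : (c.arc i k).head? = some (c.toFun i) := by
  simp [arc, List.range_succ_eq_map]

@[simp] theorem getLast?_arc (i : ZMod n) (k : ℕ) :
    (c.arc i k).getLast? = some (c.toFun (i + k)) := by
  simp [arc, List.range_succ]

structure IsBridge (i j : ZMod n) (l : List V) : Prop where
  ne_nil : l ≠ []
  nodup : l.Nodup
  disjoint : ∀ v ∈ l, v ∉ Set.range c.toFun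
  isChain : (c.toFun i :: (l ++ [c.toFun j])).IsChain G.Adj

variable {c}

theorem IsBridge.reverse {i j : ZMod n} {l : List V} (hb : c.IsBridge i j l) :
    c.IsBridge j i l.reverse := by
  refine ⟨by simpa using hb.ne_nil, List.nodup_reverse.2 hb.nodup,
    fun v hv => hb.disjoint v (by simpa using hv), ?_⟩
  simpa using List.isChain_reverse.2 (hb.isChain.imp fun _ _ h => h.symm)

/-- Closing a bridge with the arc of `c` from `c j` back to `c i`. -/
theorem IsBridge.nonempty_gcycle {i j : ZMod n} {l : List V} (hb : c.IsBridge i j l)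
    (h3 : 3 ≤ l.length + (i - j).val + 1) : Nonempty (GCycle G (l.length + (i - j).val + 1)) := by
  have : NeZero n := ⟨by have := c.three_le; omega⟩
  have hlen : (l ++ c.arc j (i - j).val).length = l.length + (i - j).val + 1 := by simp; omega
  rw [← hlen]
  obtain ⟨a, l', rfl⟩ := List.exists_cons_of_ne_nil hb.ne_nil
  refine nonempty_of_list (by omega) ?_ ?_
  · refine List.nodup_append.2 ⟨hb.nodup, c.nodup_arc _ (ZMod.val_lt _), fun v hv w hw hvw => ?_⟩
    exact hb.disjoint v hv (hvw ▸ c.mem_range_of_mem_arc hw)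
  · obtain ⟨hai, hch⟩ := List.isChain_cons.1 hb.isChain
    rw [List.isChain_append] at hch
    have htake : (a :: l' ++ c.arc j (i - j).val).take 1 = [a] := rfl
    rw [htake, List.append_assoc, List.isChain_append]
    refine ⟨hch.1, List.isChain_append.2 ⟨c.isChain_arc _ _, List.isChain_singleton a, ?_⟩, ?_⟩
    · simpa [ZMod.natCast_zmod_val] using hai a (by simp)
    · simpa using hch.2.2

theorem IsBridge.length_add_val_ne {i j : ZMod n} {l : List V} (hb : c.IsBridge i j l) {k : ℕ}
    (hk : 3 ≤ k) (hfree : IsEmpty (GCycle G k)) : l.length + (i - j).val + 1 ≠ k := by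
  rintro hlen
  exact hfree.false (hlen ▸ (hb.nonempty_gcycle (hlen ▸ hk)).some)

theorem IsBridge.admissible (h4 : IsEmpty (GCycle G 4)) (h6 : IsEmpty (GCycle G 6))
    {i j : ZMod n} {l : List V} (hb : c.IsBridge i j l) : BridgeAdmissible l.length i j := by
  have hrev := hb.reverse
  simp only [BridgeAdmissible, List.mem_cons, List.not_mem_nil, or_false, forall_eq_or_imp,
    forall_eq]
  exact ⟨⟨hb.length_add_val_ne (by norm_num) h4, hb.length_add_val_ne (by norm_num) h6⟩,
    by simpa using hrev.length_add_val_ne (by norm_num) h4,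
    by simpa using hrev.length_add_val_ne (by norm_num) h6⟩

end GCycle

theorem SimpleGraph.commonNeighbors_subsingleton {V : Type} {G : SimpleGraph V}
    (h4 : IsEmpty (GCycle G 4)) {x y : V} (hxy : x ≠ y) : (G.commonNeighbors x y).Subsingleton := by
  intro a ha b hb
  by_contra hab
  simp only [mem_commonNeighbors] at ha hb
  refine h4.false (GCycle.nonempty_of_list (L := [x, a, y, b]) (by simp) ?_ ?_).some
  · simp [hxy, hab, ha.1.ne, hb.1.ne, ha.2.ne', hb.2.ne]
  · simp [ha.1, ha.2.symm, hb.2, hb.1.symm]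

namespace GCycle

variable {V : Type} {G : SimpleGraph V} {n : ℕ} (c : GCycle G n)

def attachments (x : V) : Set (ZMod n) := {i | G.Adj x (c.toFun i)}

@[simp] theorem mem_attachments {x : V} {i : ZMod n} : i ∈ c.attachments x ↔ G.Adj x (c.toFun i) :=
  Iff.rfl

theorem ncard_attachments (x : V) :
    {y ∈ Set.range c.toFun | G.Adj x y}.ncard = (c.attachments x).ncard := by
  have : {y ∈ Set.range c.toFun | G.Adj x y} = c.toFun '' c.attachments x := by
    ext y
    constructor
    · rintro ⟨⟨i, rfl⟩, h⟩
      exact ⟨i, h, rfl⟩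
    · rintro ⟨i, h, rfl⟩
      exact ⟨⟨i, rfl⟩, h⟩
  rw [this, Set.ncard_image_of_injective _ c.inj]

variable {c} in
theorem isBridge_arc {m : ℕ} (d : GCycle G m) {j : ZMod m} {k : ℕ} (hk : k < m)
    (hoff : ∀ v ∈ Set.range d.toFun, v ∉ Set.range c.toFun) {i i' : ZMod n}
    (hi : G.Adj (c.toFun i) (d.toFun j)) (hi' : G.Adj (d.toFun (j + k)) (c.toFun i')) :
    c.IsBridge i i' (d.arc j k) := by
  refine ⟨?_, d.nodup_arc j hk, fun v hv => hoff v (d.mem_range_of_mem_arc hv), ?_⟩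
  · simp [← List.length_pos_iff]
  · refine List.isChain_cons.2 ⟨by simpa using hi, List.isChain_append.2 ⟨d.isChain_arc j k,
      List.isChain_singleton _, by simpa using hi'⟩⟩

variable {c} (h4 : IsEmpty (GCycle G 4)) (h6 : IsEmpty (GCycle G 6))
include h4 h6

theorem bridgeAdmissible_attachments {x : V} (hx : x ∉ Set.range c.toFun) :
    ∀ i ∈ c.attachments x, ∀ j ∈ c.attachments x, BridgeAdmissible 1 i j := fun i hi j hj =>
  IsBridge.admissible (c := c) (l := [x]) h4 h6
    ⟨by simp, by simp, by simpa using hx, by simpa using ⟨hi.symm, hj⟩⟩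

theorem bridgeAdmissible_attachments_of_adj {x y : V} (hx : x ∉ Set.range c.toFun)
    (hy : y ∉ Set.range c.toFun) (hxy : G.Adj x y) :
    ∀ i ∈ c.attachments x, ∀ j ∈ c.attachments y, BridgeAdmissible 2 i j := fun i hi j hj =>
  IsBridge.admissible (c := c) (l := [x, y]) h4 h6
    ⟨by simp, by simp [hxy.ne], by simp only [List.forall_mem_cons]; exact ⟨hx, hy, by simp⟩,
      by simpa using ⟨hi.symm, hxy, hj⟩⟩

theorem bridgeAdmissible_attachments_of_path {x y z : V} (hx : x ∉ Set.range c.toFun)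
    (hy : y ∉ Set.range c.toFun) (hz : z ∉ Set.range c.toFun) (hxy : G.Adj x y)
    (hyz : G.Adj y z) (hxz : x ≠ z) :
    ∀ i ∈ c.attachments x, ∀ j ∈ c.attachments z, BridgeAdmissible 3 i j := fun i hi j hj =>
  IsBridge.admissible (c := c) (l := [x, y, z]) h4 h6
    ⟨by simp, by simp [hxy.ne, hyz.ne, hxz],
      by simp only [List.forall_mem_cons]; exact ⟨hx, hy, hz, by simp⟩,
      by simpa using ⟨hi.symm, hxy, hyz, hj⟩⟩

theorem clawPattern_of_two_lt_ncard (hn : n ≤ 11) {x : V} (hx : x ∉ Set.range c.toFun)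
    (h3 : 2 < (c.attachments x).ncard) :
    (n = 9 ∧ ClawPattern (c.attachments x) 3 3) ∨
      (n = 11 ∧ (ClawPattern (c.attachments x) 1 5 ∨ ClawPattern (c.attachments x) 3 3)) := by
  have : NeZero n := ⟨by have := c.three_le; omega⟩
  obtain ⟨p, q, r, hp, hq, hr, hpq, hpr, hqr⟩ := (Set.two_lt_ncard_iff (Set.toFinite _)).1 h3
  have hX : ∀ d ∈ ({0, q - p, r - p} : Set (ZMod n)), p + d ∈ c.attachments x := by
    simp_all
  exact (clawPattern_of_bridgeAdmissible c.three_le hn (sub_ne_zero.2 hpq.symm)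
    (sub_ne_zero.2 hpr.symm) (sub_left_injective.ne hqr) (forall_bridgeAdmissible_of_add p hX hX
      (bridgeAdmissible_attachments h4 h6 hx))).imp (And.imp_right (·.of_add hX))
    (And.imp_right (Or.imp (·.of_add hX) (·.of_add hX)))

theorem edgeClawPattern_of_adj (hn : n ≤ 11) {x y : V} (hx : x ∉ Set.range c.toFun)
    (hy : y ∉ Set.range c.toFun) (hxy : G.Adj x y) (h2x : 1 < (c.attachments x).ncard)
    (h2y : 1 < (c.attachments y).ncard) :
    (n = 10 ∧ (EdgeClawPattern (c.attachments x) (c.attachments y) 1 4 1 ∨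
        EdgeClawPattern (c.attachments y) (c.attachments x) 1 4 1 ∨
        EdgeClawPattern (c.attachments x) (c.attachments y) 3 2 3 ∨
        EdgeClawPattern (c.attachments y) (c.attachments x) 3 2 3)) ∨
      (n = 11 ∧ (EdgeClawPattern (c.attachments x) (c.attachments y) 1 4 1 ∨
        EdgeClawPattern (c.attachments y) (c.attachments x) 1 4 1 ∨
        EdgeClawPattern (c.attachments x) (c.attachments y) 1 5 1 ∨
        EdgeClawPattern (c.attachments y) (c.attachments x) 1 5 1)) := by
  have : NeZero n := ⟨by have := c.three_le; omega⟩
  obtain ⟨p, p', hp, hp', hpp'⟩ := (Set.one_lt_ncard_iff (Set.toFinite _)).1 h2x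
  obtain ⟨q, q', hq, hq', hqq'⟩ := (Set.one_lt_ncard_iff (Set.toFinite _)).1 h2y
  have hX : ∀ d ∈ ({0, p' - p} : Set (ZMod n)), p + d ∈ c.attachments x := by simp_all
  have hY : ∀ d ∈ ({q - p, q' - p} : Set (ZMod n)), p + d ∈ c.attachments y := by simp_all
  have hshare : ¬ (q - p ∈ ({0, p' - p} : Set (ZMod n)) ∧ q' - p ∈ ({0, p' - p} : Set (ZMod n))) :=
    fun ⟨h, h'⟩ => hqq' <| c.inj <| G.commonNeighbors_subsingleton h4 hxy.ne
      (G.mem_commonNeighbors.2 ⟨by simpa using hX _ h, hq⟩)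
      (G.mem_commonNeighbors.2 ⟨by simpa using hX _ h', hq'⟩)
  refine (edgeClawPattern_of_bridgeAdmissible c.three_le hn (sub_ne_zero.2 hpp'.symm)
    (forall_bridgeAdmissible_of_add p hX hX (bridgeAdmissible_attachments h4 h6 hx))
    (sub_left_injective.ne hqq')
    (forall_bridgeAdmissible_of_add p hY hY (bridgeAdmissible_attachments h4 h6 hy))
    (forall_bridgeAdmissible_of_add p hX hY
      (bridgeAdmissible_attachments_of_adj h4 h6 hx hy hxy)) hshare).imp ?_ ?_ <;>
  exact And.imp_right (Or.imp (·.of_add hX hY) <| Or.imp (·.of_add hY hX) <|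
    Or.imp (·.of_add hX hY) (·.of_add hY hX))

theorem pathClawPattern_of_adj (hn : n ≤ 11) {x y z : V} (hx : x ∉ Set.range c.toFun)
    (hy : y ∉ Set.range c.toFun) (hz : z ∉ Set.range c.toFun) (hxz : x ≠ z) (hxy : G.Adj x y)
    (hyz : G.Adj y z) (h2x : 1 < (c.attachments x).ncard) (h1y : (c.attachments y).Nonempty)
    (h2z : 1 < (c.attachments z).ncard) :
    n = 11 ∧
      (PathClawPattern (c.attachments x) (c.attachments y) (c.attachments z) 3 2 2 3 ∨
        PathClawPattern (c.attachments z) (c.attachments y) (c.attachments x) 3 2 2 3) := by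
  have : NeZero n := ⟨by have := c.three_le; omega⟩
  obtain ⟨p, p', hp, hp', hpp'⟩ := (Set.one_lt_ncard_iff (Set.toFinite _)).1 h2x
  obtain ⟨r, hr⟩ := h1y
  obtain ⟨q, q', hq, hq', hqq'⟩ := (Set.one_lt_ncard_iff (Set.toFinite _)).1 h2z
  have hX : ∀ d ∈ ({0, p' - p} : Set (ZMod n)), p + d ∈ c.attachments x := by simp_all
  have hY : ∀ d ∈ ({r - p} : Set (ZMod n)), p + d ∈ c.attachments y := by simp_all
  have hZ : ∀ d ∈ ({q - p, q' - p} : Set (ZMod n)), p + d ∈ c.attachments z := by simp_all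
  obtain ⟨h11, h⟩ := pathClawPattern_of_bridgeAdmissible c.three_le hn (sub_ne_zero.2 hpp'.symm)
    (forall_bridgeAdmissible_of_add p hX hX (bridgeAdmissible_attachments h4 h6 hx))
    (forall_bridgeAdmissible_of_add p hX hY
      (bridgeAdmissible_attachments_of_adj h4 h6 hx hy hxy))
    (sub_left_injective.ne hqq')
    (forall_bridgeAdmissible_of_add p hZ hZ (bridgeAdmissible_attachments h4 h6 hz))
    (forall_bridgeAdmissible_of_add p hZ hY
      (bridgeAdmissible_attachments_of_adj h4 h6 hz hy hyz.symm))
    (forall_bridgeAdmissible_of_add p hX hZ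
      (bridgeAdmissible_attachments_of_path h4 h6 hx hy hz hxy hyz hxz))
  exact ⟨h11, h.imp (·.of_add hX hY hZ) (·.of_add hZ hY hX)⟩

theorem pentagonClawPattern_of_injective (hn : n ≤ 11) {x : ZMod 5 → V}
    (hinj : Function.Injective x) (hadj : ∀ j, G.Adj (x j) (x (j + 1)))
    (hx : ∀ j, x j ∉ Set.range c.toFun)
    (hatt : ∀ j, (c.attachments (x j)).Nonempty) :
    n = 10 ∧ (PentagonClawPattern (fun j => c.attachments (x j)) 2 ∨
      PentagonClawPattern (fun j => c.attachments (x (-j))) 2) := by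
  choose p hp using hatt
  let pentagon : GCycle G 5 := ⟨x, hinj, hadj, by norm_num⟩
  have hadm : ∀ j (k : ℕ), k < 5 → BridgeAdmissible (k + 1) (p j) (p (j + k)) := fun j k hk => by
    simpa using (isBridge_arc pentagon hk (by rintro _ ⟨i, rfl⟩; exact hx i) (hp j).symm
      (hp (j + k))).admissible h4 h6
  have hwrap : ∀ j : ZMod 5, j + 1 + 4 = j ∧ j + 2 + 3 = j := by decide
  have hstep (j : ZMod 5) : PentagonStep (p j - p 0) (p (j + 1) - p 0) := by
    refine PentagonStep.sub_right ⟨by simpa using hadm j 1, ?_⟩ (p 0)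
    simpa only [Nat.cast_ofNat, (hwrap j).1] using (hadm (j + 1) 4 (by norm_num)).symm
  have hskip (j : ZMod 5) : PentagonSkip (p j - p 0) (p (j + 2) - p 0) := by
    refine PentagonSkip.sub_right ⟨by simpa using hadm j 2, ?_⟩ (p 0)
    simpa only [Nat.cast_ofNat, (hwrap j).2] using (hadm (j + 2) 3 (by norm_num)).symm
  obtain ⟨h10, h⟩ := pentagonClawPattern_of_step_skip c.three_le hn _ (sub_self _) hstep hskip
  have hshift (σ : ZMod 5 → ZMod 5) (j : ZMod 5) :
      ∀ d ∈ ({p (σ j) - p 0} : Set (ZMod n)), p 0 + d ∈ c.attachments (x (σ j)) := by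
    rintro _ rfl
    simpa using hp (σ j)
  exact ⟨h10, h.imp (·.of_add (hshift id)) (·.of_add (hshift Neg.neg))⟩

end GCycle

namespace PlaneGraph

variable (P : PlaneGraph) {n : ℕ} {c : GCycle P.G n}

theorem notMem_range_of_mem_inside {v : P.V} (hv : v ∈ P.inside (P.cverts c)) :
    v ∉ Set.range c.toFun :=
  fun h => Set.eq_empty_iff_forall_notMem.1 (P.region_disj_inside (P.cverts c)) v ⟨hv, h⟩

theorem hasClawCells_of_hasClaw (h46 : P.NoC4C6) (hn : n ≤ 11) (h : P.HasClaw (P.cverts c)) :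
    (n = 9 ∧ P.HasClawCells c 3 3 3) ∨
      (n = 11 ∧ (P.HasClawCells c 1 5 5 ∨ P.HasClawCells c 3 3 5)) := by
  obtain ⟨x, hx, h3⟩ := h
  rw [cverts, c.ncard_attachments] at h3
  rcases GCycle.clawPattern_of_two_lt_ncard h46.1 h46.2 hn (P.notMem_range_of_mem_inside hx) h3 with
    ⟨rfl, h⟩ | ⟨rfl, h | h⟩
  exacts [Or.inl ⟨rfl, rfl, x, hx, h⟩, Or.inr ⟨rfl, Or.inl ⟨rfl, x, hx, h⟩⟩,
    Or.inr ⟨rfl, Or.inr ⟨rfl, x, hx, h⟩⟩]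

theorem hasEdgeClawCells_of_hasEdgeClaw (h46 : P.NoC4C6) (hn : n ≤ 11)
    (h : P.HasEdgeClaw (P.cverts c)) :
    (n = 10 ∧ (P.HasEdgeClawCells c 1 4 1 4 ∨ P.HasEdgeClawCells c 3 2 3 2)) ∨
      (n = 11 ∧ (P.HasEdgeClawCells c 1 4 1 5 ∨ P.HasEdgeClawCells c 1 5 1 4)) := by
  obtain ⟨x, hx, y, hy, hxy, h2x, h2y⟩ := h
  rw [cverts, c.ncard_attachments] at h2x h2y
  rcases GCycle.edgeClawPattern_of_adj h46.1 h46.2 hn (P.notMem_range_of_mem_inside hx)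
    (P.notMem_range_of_mem_inside hy) hxy h2x h2y with
    ⟨rfl, h | h | h | h⟩ | ⟨rfl, h | h | h | h⟩
  exacts [Or.inl ⟨rfl, Or.inl ⟨rfl, x, hx, y, hy, hxy, h⟩⟩,
    Or.inl ⟨rfl, Or.inl ⟨rfl, y, hy, x, hx, hxy.symm, h⟩⟩,
    Or.inl ⟨rfl, Or.inr ⟨rfl, x, hx, y, hy, hxy, h⟩⟩,
    Or.inl ⟨rfl, Or.inr ⟨rfl, y, hy, x, hx, hxy.symm, h⟩⟩,
    Or.inr ⟨rfl, Or.inl ⟨rfl, x, hx, y, hy, hxy, h⟩⟩,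
    Or.inr ⟨rfl, Or.inl ⟨rfl, y, hy, x, hx, hxy.symm, h⟩⟩,
    Or.inr ⟨rfl, Or.inr ⟨rfl, x, hx, y, hy, hxy, h⟩⟩,
    Or.inr ⟨rfl, Or.inr ⟨rfl, y, hy, x, hx, hxy.symm, h⟩⟩]

theorem hasPathClawCells_of_hasPathClaw (h46 : P.NoC4C6) (hn : n ≤ 11)
    (h : P.HasPathClaw (P.cverts c)) : n = 11 ∧ P.HasPathClawCells c 3 2 2 3 1 := by
  obtain ⟨x, hx, y, hy, z, hz, hxz, hxy, hyz, h2x, h1y, h2z⟩ := h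
  rw [cverts, c.ncard_attachments] at h2x h1y h2z
  obtain ⟨rfl, h | h⟩ := GCycle.pathClawPattern_of_adj h46.1 h46.2 hn
    (P.notMem_range_of_mem_inside hx) (P.notMem_range_of_mem_inside hy)
    (P.notMem_range_of_mem_inside hz) hxz hxy hyz h2x
    (Set.nonempty_of_ncard_ne_zero (by omega)) h2z
  exacts [⟨rfl, rfl, x, hx, y, hy, z, hz, hxz, hxy, hyz, h⟩,
    ⟨rfl, rfl, z, hz, y, hy, x, hx, hxz.symm, hyz.symm, hxy.symm, h⟩]

theorem hasPentagonClawCells_of_hasPentagonClaw (h46 : P.NoC4C6) (hn : n ≤ 11)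
    (h : P.HasPentagonClaw (P.cverts c)) : n = 10 ∧ P.HasPentagonClawCells c 2 := by
  obtain ⟨x, hinj, hx, hadj, hatt⟩ := h
  have hatt' : ∀ j, (c.attachments (x j)).Nonempty := fun j => by
    obtain ⟨_, ⟨i, rfl⟩, h⟩ := hatt j
    exact ⟨i, h⟩
  obtain ⟨rfl, h | h⟩ := GCycle.pentagonClawPattern_of_injective h46.1 h46.2 hn hinj hadj
    (fun j => P.notMem_range_of_mem_inside (hx j)) hatt'
  · exact ⟨rfl, rfl, x, hinj, hx, hadj, h⟩
  · refine ⟨rfl, rfl, fun j => x (-j), hinj.comp neg_injective, fun j => hx (-j), fun j => ?_, h⟩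
    simpa using (hadj (-(j + 1))).symm

end PlaneGraph

theorem bad_cycle_structure_general (P : PlaneGraph)
    (h46 : P.NoC4C6) {n : ℕ} (c : GCycle P.G n) (hn : n ≤ 11)
    (hbad : P.Bad (P.cverts c)) :
    (n = 9 ∨ n = 10 ∨ n = 11) ∧
    (n = 9 → P.HasClawCells c 3 3 3) ∧
    (n = 10 → P.HasEdgeClawCells c 1 4 1 4 ∨ P.HasEdgeClawCells c 3 2 3 2 ∨
      P.HasPentagonClawCells c 2) ∧
    (n = 11 → P.HasClawCells c 1 5 5 ∨ P.HasClawCells c 3 3 5 ∨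
      P.HasEdgeClawCells c 1 4 1 5 ∨ P.HasEdgeClawCells c 1 5 1 4 ∨
      P.HasPathClawCells c 3 2 2 3 1) := by
  rcases hbad with h | h | h | h
  · rcases P.hasClawCells_of_hasClaw h46 hn h with ⟨rfl, h⟩ | ⟨rfl, h⟩
    · exact ⟨by norm_num, fun _ => h, by norm_num, by norm_num⟩
    · exact ⟨by norm_num, by norm_num, by norm_num, fun _ => by tauto⟩
  · rcases P.hasEdgeClawCells_of_hasEdgeClaw h46 hn h with ⟨rfl, h⟩ | ⟨rfl, h⟩
    · exact ⟨by norm_num, by norm_num, fun _ => by tauto, by norm_num⟩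
    · exact ⟨by norm_num, by norm_num, by norm_num, fun _ => by tauto⟩
  · obtain ⟨rfl, h⟩ := P.hasPathClawCells_of_hasPathClaw h46 hn h
    exact ⟨by norm_num, by norm_num, by norm_num, fun _ => by tauto⟩
  · obtain ⟨rfl, h⟩ := P.hasPentagonClawCells_of_hasPentagonClaw h46 hn h
    exact ⟨by norm_num, by norm_num, fun _ => by tauto, by norm_num⟩

/-- In a plane graph without 4- or 6-cycles, a bad cycle `c`
of length at most 11 has length 9, 10 or 11; if `|c| = 9` it has a
(5,5,5)-claw, if `|c| = 10` it has a (3,7,3,7)- or (5,5,5,5)-edge-claw or a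
(5,5,5,5,5)-pentagon-claw, and if `|c| = 11` it has a (3,7,7)- or
(5,5,7)-claw, a (3,7,3,8)-edge-claw, or a (5,5,5,5,5)-path-claw.
(Cell lengths are encoded by arc gaps: a claw cell of length `ℓ` has gap
`ℓ - 2`, an edge-claw cell through the inner edge has gap `ℓ - 3`, etc.) -/
theorem bad_cycle_structure (P : PlaneGraph) (hconn : P.G.Connected)
    (h46 : P.NoC4C6) {n : ℕ} (c : GCycle P.G n) (hn : n ≤ 11)
    (hbad : P.Bad (P.cverts c)) :
    (n = 9 ∨ n = 10 ∨ n = 11) ∧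
    (n = 9 → P.HasClawCells c 3 3 3) ∧
    (n = 10 → P.HasEdgeClawCells c 1 4 1 4 ∨ P.HasEdgeClawCells c 3 2 3 2 ∨
      P.HasPentagonClawCells c 2) ∧
    (n = 11 → P.HasClawCells c 1 5 5 ∨ P.HasClawCells c 3 3 5 ∨
      P.HasEdgeClawCells c 1 4 1 5 ∨ P.HasEdgeClawCells c 1 5 1 4 ∨
      P.HasPathClawCells c 3 2 2 3 1) :=
  bad_cycle_structure_general P h46 c hn hbad
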